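/- The number of right special factors of the Thue–Morse sequence is: s(0)=1, s(n)=2 for 0<n≤2, s(n)=4 for 2·2^m < n ≤ 3·2^m, and s(n)=2 for 3·2^m < n ≤ 4·2^m (m ≥ 0). -/

import Mathlib

/-- The Thue–Morse sequence: parity of the number of 1s in binary (fixed point of
`0 ↦ 01`, `1 ↦ 10` starting from `0`). -/
def tm (n : ℕ) : Fin 2 := (Fin.ofNat 2 ((Nat.digits 2 n).count 1) : Fin 2)

/-- The set of length-`n` factors of the Thue–Morse sequence. -/
def tmFactors (n : ℕ) : Set (Fin n → Fin 2) :=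
  {u | ∃ i : ℕ, ∀ j : Fin n, tm (i + j) = u j}

/-- The set of right special factors of length `n` of the Thue–Morse sequence. -/
def tmRightSpecial (n : ℕ) : Set (Fin n → Fin 2) :=
  {u | u ∈ tmFactors n ∧ ∃ a b : Fin 2, a ≠ b ∧
    Fin.snoc u a ∈ tmFactors (n + 1) ∧ Fin.snoc u b ∈ tmFactors (n + 1)}

/-- The right special counting function of the Thue–Morse sequence. -/
noncomputable def tmS (n : ℕ) : ℕ := (tmRightSpecial n).ncard

/-!
The Thue–Morse word contains no cube `aaa` of a letter. Hence a factor of length 4 cannot occur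
both at an even and at an odd position, so all occurrences of a factor of length `n ≥ 4` have the
same parity. If a right special factor of length `n ≥ 4` occurred at positions `p` with `p + n`
odd, its follower would be the second letter of a block `ab` whose first letter ends the factor,
and would be forced. So it occurs at positions `p ≡ n (mod 2)`, and is the trimmed image under
`0 ↦ 01`, `1 ↦ 10` of a unique right special factor of length `⌈n/2⌉`. This gives
`s(n) = s(⌈n/2⌉)` for `n ≥ 4`, reducing everything to `s(0), …, s(3) = 1, 2, 2, 4`.
-/

theorem tm_two_mul_add (k : ℕ) {b : ℕ} (hb : b < 2) :
    tm (2 * k + b) = tm k + Fin.ofNat 2 b := by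
  rcases Nat.eq_zero_or_pos (2 * k + b) with h | h
  · obtain ⟨rfl, rfl⟩ : k = 0 ∧ b = 0 := by omega
    rfl
  unfold tm
  rw [Nat.digits_def' (by norm_num) h, show (2 * k + b) % 2 = b by omega,
    show (2 * k + b) / 2 = k by omega, List.count_cons]
  interval_cases b <;> simp [Fin.ext_iff, Fin.val_add]

theorem tm_two_mul (k : ℕ) : tm (2 * k) = tm k := by
  simpa using tm_two_mul_add k (b := 0) (by norm_num)

theorem tm_two_mul_add_one (k : ℕ) : tm (2 * k + 1) = tm k + 1 := by
  simpa using tm_two_mul_add k (b := 1) (by norm_num)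

theorem tm_ne_of_eq_succ {n : ℕ} (h : tm n = tm (n + 1)) : tm (n + 1) ≠ tm (n + 2) := by
  have hne : ∀ x : Fin 2, x ≠ x + 1 := by decide
  rcases Nat.even_or_odd' n with ⟨a, rfl | rfl⟩
  · rw [tm_two_mul, tm_two_mul_add_one] at h
    exact absurd h (hne _)
  · rw [show 2 * a + 1 + 1 = 2 * (a + 1) by ring, show 2 * a + 1 + 2 = 2 * (a + 1) + 1 by ring,
      tm_two_mul, tm_two_mul_add_one]
    exact hne _

def tmWindow (i n : ℕ) : Fin n → Fin 2 := fun j => tm (i + j)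

theorem mem_tmFactors_iff {n : ℕ} {u : Fin n → Fin 2} :
    u ∈ tmFactors n ↔ ∃ i, tmWindow i n = u := by
  simp only [tmFactors, Set.mem_ofPred_eq, funext_iff, tmWindow]

theorem tmWindow_succ (i n : ℕ) :
    tmWindow i (n + 1) = Fin.snoc (tmWindow i n) (tm (i + n)) := by
  funext j
  induction j using Fin.lastCases <;> simp [tmWindow]

theorem mem_tmRightSpecial_iff {n : ℕ} {u : Fin n → Fin 2} :
    u ∈ tmRightSpecial n ↔
      ∃ i i', tmWindow i n = u ∧ tmWindow i' n = u ∧ tm (i + n) ≠ tm (i' + n) := by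
  simp only [tmRightSpecial, mem_tmFactors_iff, tmWindow_succ, Fin.snoc_inj]
  constructor
  · rintro ⟨-, a, b, hab, ⟨i, rfl, rfl⟩, ⟨i', hi', rfl⟩⟩
    exact ⟨i, i', rfl, hi', hab⟩
  · rintro ⟨i, i', rfl, hi', hne⟩
    exact ⟨⟨i, rfl⟩, _, _, hne, ⟨i, rfl, rfl⟩, ⟨i', hi', rfl⟩⟩

theorem tmRightSpecial_last_ne {n : ℕ} {u : Fin (n + 2) → Fin 2}
    (hu : u ∈ tmRightSpecial (n + 2)) : u ⟨n, by omega⟩ ≠ u ⟨n + 1, by omega⟩ := by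
  obtain ⟨i, i', rfl, hi', hne⟩ := mem_tmRightSpecial_iff.1 hu
  intro h
  have e0 := congrFun hi' ⟨n, by omega⟩
  have e1 := congrFun hi' ⟨n + 1, by omega⟩
  simp only [tmWindow] at h e0 e1
  -- neither follower can repeat the last letter without creating a cube `aaa`
  have hi : tm (i + (n + 1)) ≠ tm (i + (n + 2)) := tm_ne_of_eq_succ h
  have hi' : tm (i' + (n + 1)) ≠ tm (i' + (n + 2)) := tm_ne_of_eq_succ (e0.trans (h.trans e1.symm))
  rw [e1] at hi'
  have hFin2 : ∀ x y c : Fin 2, x ≠ y → c ≠ x → c ≠ y → False := by decide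
  exact hFin2 _ _ _ hne hi hi'

/-- The length-`n` factor starting at position `r` of the image of `v` under
`0 ↦ 01`, `1 ↦ 10`. -/
def substFactor {m : ℕ} (n r : ℕ) (h : n + r ≤ 2 * m) (v : Fin m → Fin 2) : Fin n → Fin 2 :=
  fun j => v ⟨(r + j) / 2, by omega⟩ + Fin.ofNat 2 (r + j)

theorem tmWindow_two_mul_add {m n : ℕ} (i r : ℕ) (h : n + r ≤ 2 * m) :
    tmWindow (2 * i + r) n = substFactor n r h (tmWindow i m) := by
  funext j
  simp only [tmWindow, substFactor]
  rw [show 2 * i + r + j = 2 * (i + (r + j) / 2) + (r + j) % 2 by omega,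
    tm_two_mul_add _ (Nat.mod_lt _ (by norm_num))]
  congr 1
  ext
  simp

theorem substFactor_injective {m n r : ℕ} (h : n + r ≤ 2 * m) (hm : 2 * m ≤ n + r) (hr : r ≤ 1) :
    Function.Injective (substFactor n r h) := by
  intro v w hvw
  funext l
  -- position `2l + 1 - r` of the factor is the second letter of the image of `v l`
  have hl := congrFun hvw ⟨2 * l + 1 - r, by omega⟩
  simp only [substFactor, show r + (2 * l + 1 - r) = 2 * l + 1 by omega,
    show (2 * l + 1) / 2 = (l : ℕ) by omega] at hl
  exact add_right_cancel hl

theorem tmWindow_even_ne_odd (a b : ℕ) : tmWindow (2 * a) 4 ≠ tmWindow (2 * b + 1) 4 := by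
  rw [← add_zero (2 * a), tmWindow_two_mul_add a 0 (m := 2) (by norm_num),
    tmWindow_two_mul_add b 1 (m := 3) (by norm_num)]
  have hcube : ¬ (tmWindow b 3 0 = tmWindow b 3 1 ∧ tmWindow b 3 1 = tmWindow b 3 2) :=
    fun ⟨h₀, h₁⟩ => tm_ne_of_eq_succ h₀ h₁
  revert hcube
  generalize tmWindow a 2 = v
  generalize tmWindow b 3 = w
  revert v w
  decide

theorem mod_two_eq_of_tmWindow_eq {n p q : ℕ} (hn : 4 ≤ n) (h : tmWindow p n = tmWindow q n) :
    p % 2 = q % 2 := by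
  have h4 : tmWindow p 4 = tmWindow q 4 := funext fun j => congrFun h ⟨j, by omega⟩
  rcases Nat.even_or_odd' p with ⟨a, rfl | rfl⟩ <;> rcases Nat.even_or_odd' q with ⟨b, rfl | rfl⟩
  · omega
  · exact absurd h4 (tmWindow_even_ne_odd a b)
  · exact absurd h4.symm (tmWindow_even_ne_odd b a)
  · omega

theorem tm_eq_of_tmWindow_eq_of_odd {n p q : ℕ} (hn : 0 < n) (h : tmWindow p n = tmWindow q n)
    (hp : (p + n) % 2 = 1) (hq : (q + n) % 2 = 1) : tm (p + n) = tm (q + n) := by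
  have hodd : ∀ k, k % 2 = 1 → tm k = tm (k - 1) + 1 := fun k hk => by
    obtain ⟨a, rfl⟩ : ∃ a, k = 2 * a + 1 := ⟨k / 2, by omega⟩
    simp [tm_two_mul_add_one, tm_two_mul]
  have hlast := congrFun h ⟨n - 1, by omega⟩
  simp only [tmWindow] at hlast
  rw [hodd _ hp, hodd _ hq, show p + n - 1 = p + (n - 1) by omega,
    show q + n - 1 = q + (n - 1) by omega, hlast]

theorem tmRightSpecial_eq_image {m n r : ℕ} (hn : 4 ≤ n) (h : n + r = 2 * m) (hr : r ≤ 1) :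
    tmRightSpecial n = substFactor n r h.le '' tmRightSpecial m := by
  ext w
  constructor
  · intro hw
    obtain ⟨p, q, hp, hq, hne⟩ := mem_tmRightSpecial_iff.1 hw
    have hpq := mod_two_eq_of_tmWindow_eq hn (hp.trans hq.symm)
    have hpr : p % 2 = r := by
      by_contra hpr
      exact hne (tm_eq_of_tmWindow_eq_of_odd (by omega) (hp.trans hq.symm) (by omega) (by omega))
    obtain ⟨a, rfl⟩ : ∃ a, p = 2 * a + r := ⟨p / 2, by omega⟩
    obtain ⟨b, rfl⟩ : ∃ b, q = 2 * b + r := ⟨q / 2, by omega⟩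
    rw [tmWindow_two_mul_add a r h.le] at hp
    rw [tmWindow_two_mul_add b r h.le] at hq
    rw [show 2 * a + r + n = 2 * (a + m) by omega, show 2 * b + r + n = 2 * (b + m) by omega,
      tm_two_mul, tm_two_mul] at hne
    have hab := substFactor_injective h.le h.ge hr (hq.trans hp.symm)
    exact ⟨tmWindow a m, mem_tmRightSpecial_iff.2 ⟨a, b, rfl, hab, hne⟩, hp⟩
  · rintro ⟨v, hv, rfl⟩
    obtain ⟨i, i', rfl, hi', hne⟩ := mem_tmRightSpecial_iff.1 hv
    refine mem_tmRightSpecial_iff.2 ⟨2 * i + r, 2 * i' + r, tmWindow_two_mul_add i r h.le,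
      by rw [tmWindow_two_mul_add i' r h.le, hi'], ?_⟩
    rwa [show 2 * i + r + n = 2 * (i + m) by omega, show 2 * i' + r + n = 2 * (i' + m) by omega,
      tm_two_mul, tm_two_mul]

theorem tmS_eq_tmS_half {n : ℕ} (hn : 4 ≤ n) : tmS n = tmS ((n + 1) / 2) := by
  have h : n + n % 2 = 2 * ((n + 1) / 2) := by omega
  rw [tmS, tmS, tmRightSpecial_eq_image hn h (by omega),
    Set.ncard_image_of_injective _ (substFactor_injective h.le h.ge (by omega))]

theorem tmS_eq_of_mul_two_pow_lt {k : ℕ} (hk : 2 ≤ k) (m : ℕ) {n : ℕ} (h₁ : k * 2 ^ m < n)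
    (h₂ : n ≤ k * 2 ^ m + 2 ^ m) : tmS n = tmS (k + 1) := by
  induction m generalizing n with
  | zero =>
    rw [show n = k + 1 by simp at h₁ h₂; omega]
  | succ m ih =>
    rw [pow_succ, ← mul_assoc] at h₁ h₂
    have : 2 ≤ k * 2 ^ m := le_trans hk (Nat.le_mul_of_pos_right k (by positivity))
    rw [tmS_eq_tmS_half (by omega)]
    exact ih (by omega) (by omega)

theorem tmRightSpecial_zero : tmRightSpecial 0 = Set.univ := by
  refine Set.eq_univ_of_forall fun u => ?_
  obtain ⟨i, -, i', -, h⟩ : ∃ i < 4, ∃ i' < 4,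
      tmWindow i 0 = u ∧ tmWindow i' 0 = u ∧ tm (i + 0) ≠ tm (i' + 0) := by revert u; decide
  exact mem_tmRightSpecial_iff.2 ⟨i, i', h⟩

theorem tmRightSpecial_one : tmRightSpecial 1 = Set.univ := by
  refine Set.eq_univ_of_forall fun u => ?_
  obtain ⟨i, -, i', -, h⟩ : ∃ i < 8, ∃ i' < 8,
      tmWindow i 1 = u ∧ tmWindow i' 1 = u ∧ tm (i + 1) ≠ tm (i' + 1) := by revert u; decide
  exact mem_tmRightSpecial_iff.2 ⟨i, i', h⟩

theorem tmRightSpecial_two : tmRightSpecial 2 = {u | u 0 ≠ u 1} := by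
  refine Set.ext fun u => ⟨tmRightSpecial_last_ne, fun hu => ?_⟩
  obtain ⟨i, -, i', -, h⟩ : ∃ i < 16, ∃ i' < 16,
      tmWindow i 2 = u ∧ tmWindow i' 2 = u ∧ tm (i + 2) ≠ tm (i' + 2) := by revert u hu; decide
  exact mem_tmRightSpecial_iff.2 ⟨i, i', h⟩

set_option maxRecDepth 4000 in
theorem tmRightSpecial_three : tmRightSpecial 3 = {u | u 1 ≠ u 2} := by
  refine Set.ext fun u => ⟨tmRightSpecial_last_ne, fun hu => ?_⟩
  obtain ⟨i, -, i', -, h⟩ : ∃ i < 32, ∃ i' < 32,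
      tmWindow i 3 = u ∧ tmWindow i' 3 = u ∧ tm (i + 3) ≠ tm (i' + 3) := by revert u hu; decide
  exact mem_tmRightSpecial_iff.2 ⟨i, i', h⟩

theorem tmS_zero : tmS 0 = 1 := by
  rw [tmS, tmRightSpecial_zero, Set.ncard_eq_toFinset_card']; rfl

theorem tmS_one : tmS 1 = 2 := by
  rw [tmS, tmRightSpecial_one, Set.ncard_eq_toFinset_card']; rfl

theorem tmS_two : tmS 2 = 2 := by
  rw [tmS, tmRightSpecial_two, Set.ncard_eq_toFinset_card']; rfl

theorem tmS_three : tmS 3 = 4 := by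
  rw [tmS, tmRightSpecial_three, Set.ncard_eq_toFinset_card']; rfl

/-- The right special counting function of the Thue–Morse sequence:
`s(0)=1`, `s(n)=2` for `0 < n ≤ 2`, `s(n)=4` for `2·2^m < n ≤ 3·2^m`, and
`s(n)=2` for `3·2^m < n ≤ 4·2^m`. -/
theorem tm_rightSpecial_count :
    tmS 0 = 1 ∧
    (∀ n : ℕ, 0 < n → n ≤ 2 → tmS n = 2) ∧
    (∀ m n : ℕ, 2 * 2 ^ m < n → n ≤ 3 * 2 ^ m → tmS n = 4) ∧
    (∀ m n : ℕ, 3 * 2 ^ m < n → n ≤ 4 * 2 ^ m → tmS n = 2) := by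
  refine ⟨tmS_zero, fun n h₀ h₂ => ?_, fun m n h₁ h₂ => ?_, fun m n h₁ h₂ => ?_⟩
  · interval_cases n
    exacts [tmS_one, tmS_two]
  · rw [tmS_eq_of_mul_two_pow_lt le_rfl m h₁ (by omega), tmS_three]
  · rw [tmS_eq_of_mul_two_pow_lt (by norm_num) m h₁ (by omega), tmS_eq_tmS_half le_rfl]
    exact tmS_two
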